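/- For the quantum SIR recurrence, the total population is conserved: xₙ + yₙ + zₙ = x₀ + y₀ + z₀ for every n ≥ 0. -/

import Mathlib

/-! Write `D = x + y (1 + β)` and `Y = y (1 + β) (x + y)`. In one step the newly recovered
`γ Y / ((1 + γ) D)` and the infected `Y / ((1 + γ) D)` add up to `Y / D`, and together with
the susceptibles `x (x + y) / D` this recombines to `(x + y) D / D = x + y`. The identity only
needs the denominators to be nonzero, which follows from `x, y > 0`, an invariant of the
recurrence. -/

theorem sir_step_sum_eq {K : Type*} [Field K] {x y z β γ : K}
    (hD : x + y * (1 + β) ≠ 0) (hγ : 1 + γ ≠ 0) :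
    x * (x + y) / (x + y * (1 + β)) +
        y * (1 + β) * (x + y) / ((1 + γ) * (x + y * (1 + β))) +
        (γ * (y * (1 + β) * (x + y)) / ((1 + γ) * (x + y * (1 + β))) + z) =
      x + y + z := by
  field_simp
  ring

theorem add_mul_one_add_pos {K : Type*} [Field K] [LinearOrder K] [IsStrictOrderedRing K]
    {x y β : K} (hx : 0 < x) (hy : 0 ≤ y) (hβ : 0 ≤ β) : 0 < x + y * (1 + β) := by
  positivity

theorem sir_step_pos {K : Type*} [Field K] [LinearOrder K] [IsStrictOrderedRing K]
    {x y β γ : K} (hx : 0 < x) (hy : 0 < y) (hβ : 0 ≤ β) (hγ : 0 ≤ γ) :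
    0 < x * (x + y) / (x + y * (1 + β)) ∧
      0 < y * (1 + β) * (x + y) / ((1 + γ) * (x + y * (1 + β))) := by
  have hD := add_mul_one_add_pos hx hy.le hβ
  constructor <;> positivity

theorem quantum_sir_conservation_general
(b c q t₀ : ℝ) (x y z : ℕ → ℝ)
    (hb : 0 < b) (hc : 0 < c) (hq : 1 < q) (ht : 0 < t₀)
    (hx0 : 0 < x 0) (hy0 : 0 < y 0)
    (hrecx : ∀ n : ℕ, x (n + 1) =
      x n * (x n + y n) / (x n + y n * (1 + b * (q - 1) * (q ^ n * t₀))))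
    (hrecy : ∀ n : ℕ, y (n + 1) =
      y n * (1 + b * (q - 1) * (q ^ n * t₀)) * (x n + y n) /
        ((1 + c * (q - 1) * (q ^ n * t₀)) *
          (x n + y n * (1 + b * (q - 1) * (q ^ n * t₀)))))
    (hrecz : ∀ n : ℕ, z (n + 1) =
      c * (q - 1) * (q ^ n * t₀) *
        (y n * (1 + b * (q - 1) * (q ^ n * t₀)) * (x n + y n)) /
        ((1 + c * (q - 1) * (q ^ n * t₀)) *
          (x n + y n * (1 + b * (q - 1) * (q ^ n * t₀)))) + z n) :
    ∀ n : ℕ, x n + y n + z n = x 0 + y 0 + z 0 := by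
  have hrate {k : ℝ} (hk : 0 ≤ k) (n : ℕ) : 0 ≤ k * (q - 1) * (q ^ n * t₀) :=
    mul_nonneg (mul_nonneg hk (sub_nonneg.2 hq.le)) (by positivity)
  have hpos (n : ℕ) : 0 < x n ∧ 0 < y n := by
    induction n with
    | zero => exact ⟨hx0, hy0⟩
    | succ n ih =>
      rw [hrecx, hrecy]
      exact sir_step_pos ih.1 ih.2 (hrate hb.le n) (hrate hc.le n)
  intro n
  induction n with
  | zero => rfl
  | succ n ih =>
    have hD := add_mul_one_add_pos (hpos n).1 (hpos n).2.le (hrate hb.le n)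
    have hγ : 0 < 1 + c * (q - 1) * (q ^ n * t₀) := by linarith [hrate hc.le n]
    rw [hrecx, hrecy, hrecz, sir_step_sum_eq hD.ne' hγ.ne', ih]

theorem quantum_sir_conservation
(b c q t₀ : ℝ) (x y z : ℕ → ℝ)
    (hb : 0 < b) (hc : 0 < c) (hq : 1 < q) (ht : 0 < t₀)
    (hx0 : 0 < x 0) (hy0 : 0 < y 0) (hz0 : 0 ≤ z 0)
    (hrecx : ∀ n : ℕ, x (n + 1) =
      x n * (x n + y n) / (x n + y n * (1 + b * (q - 1) * (q ^ n * t₀))))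
    (hrecy : ∀ n : ℕ, y (n + 1) =
      y n * (1 + b * (q - 1) * (q ^ n * t₀)) * (x n + y n) /
        ((1 + c * (q - 1) * (q ^ n * t₀)) *
          (x n + y n * (1 + b * (q - 1) * (q ^ n * t₀)))))
    (hrecz : ∀ n : ℕ, z (n + 1) =
      c * (q - 1) * (q ^ n * t₀) *
        (y n * (1 + b * (q - 1) * (q ^ n * t₀)) * (x n + y n)) /
        ((1 + c * (q - 1) * (q ^ n * t₀)) *
          (x n + y n * (1 + b * (q - 1) * (q ^ n * t₀)))) + z n) :
    ∀ n : ℕ, x n + y n + z n = x 0 + y 0 + z 0 :=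
  quantum_sir_conservation_general b c q t₀ x y z hb hc hq ht hx0 hy0 hrecx hrecy hrecz
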